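/- arXiv:1708.03663 — 6 statements merged into one kernel-verified Lean document; each statement's English description precedes it below -/
import Mathlib

section
/- Let K be a field that is complete with respect to a nontrivial nonarchimedean absolute value ‖·‖ and algebraically closed (for example, K = ℂ_p). Let ρ > 0 be a real number and let (r_n)_{n≥0} be a sequence in K with ‖r_n‖·ρ^n → 0 as n → ∞, so that F(w) := Σ_{n≥0} r_n w^n converges for every w ∈ K with ‖w‖ ≤ ρ. If there is a constant c ≥ 0 such that ‖F(w)‖ = c for every w ∈ K with ‖w‖ ≤ ρ, then ‖F(0)‖ ≥ ρ·‖r_1‖. (Equivalently, in valuation terms with ρ = p^{-m}: the function F has v(F(w)) constant on the closed disc of valuation-radius m, and then v(F(0)) − v(F'(0)) ≤ m, since F'(0) = r_1.) -/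
/-!
Averaging `ζ⁻ⁱᵏ F(ζⁱ w)` over the `N`-th roots of unity isolates `N ∑_{n ≡ k (N)} rₙ wⁿ`. When `N`
is a unit for the norm, the ultrametric inequality bounds this by any bound `c` of `‖F‖` on the
sphere `‖z‖ = ‖w‖`, and for `N` large every term except `N rₖ wᵏ` is as small as we like; this
gives Cauchy's inequality `‖rₖ‖ ‖w‖ᵏ ≤ c`. For `k = 1` and `‖w‖ ≤ ρ` the right-hand side is
`‖F 0‖`, and since the norms of an algebraically closed field are dense in `(0, ∞)`, `‖w‖` can be
taken arbitrarily close to `ρ`.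
-/

open Filter Finset Topology

lemma Nat.ModEq.le_of_ne {n k N : ℕ} (h : n ≡ k [MOD N]) (hkN : k < N) (hnk : n ≠ k) : N ≤ n := by
  by_contra! hn
  exact hnk (by simpa [Nat.ModEq, Nat.mod_eq_of_lt hn, Nat.mod_eq_of_lt hkN] using h)

lemma norm_eq_one_of_pow_eq_one {K : Type*} [NormedDivisionRing K] {ζ : K} {N : ℕ}
    (h : ζ ^ N = 1) (hN : N ≠ 0) : ‖ζ‖ = 1 :=
  (pow_eq_one_iff_of_nonneg (norm_nonneg ζ) hN).mp (by rw [← norm_pow, h, norm_one])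

namespace IsPrimitiveRoot

variable {K : Type*} [Field K] {ζ : K} {N : ℕ}

theorem geom_sum_pow_mul_inv_pow (hζ : IsPrimitiveRoot ζ N) (n k : ℕ) :
    ∑ i ∈ range N, (ζ ^ n * (ζ ^ k)⁻¹) ^ i = if n ≡ k [MOD N] then (N : K) else 0 := by
  rcases N.eq_zero_or_pos with rfl | hN
  · simp
  have hζ0 : ζ ≠ 0 := hζ.ne_zero hN.ne'
  have hpow : ζ ^ n = ζ ^ k ↔ n ≡ k [MOD N] := by
    rw [hζ.eq_orderOf]
    exact (hζ.isOfFinOrder hN.ne').pow_eq_pow_iff_modEq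
  split_ifs with hnk
  · have h1 : ζ ^ n * (ζ ^ k)⁻¹ = 1 := by
      rw [hpow.mpr hnk, mul_inv_cancel₀ (pow_ne_zero k hζ0)]
    simp [h1]
  · have h1 : ζ ^ n * (ζ ^ k)⁻¹ ≠ 1 := by
      rwa [Ne, mul_inv_eq_one₀ (pow_ne_zero k hζ0), hpow]
    have hN1 : (ζ ^ n * (ζ ^ k)⁻¹) ^ N = 1 := by
      rw [mul_pow, inv_pow, ← pow_mul, ← pow_mul, mul_comm n, mul_comm k, pow_mul, pow_mul,
        hζ.pow_eq_one, one_pow, one_pow, inv_one, mul_one]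
    rw [geom_sum_eq h1, hN1, sub_self, zero_div]

variable [TopologicalSpace K] [IsTopologicalRing K] [T2Space K]

theorem sum_inv_pow_mul_tsum_eq (hζ : IsPrimitiveRoot ζ N) {r : ℕ → K} {w : K} (k : ℕ)
    (hs : ∀ i, Summable fun n => r n * (ζ ^ i * w) ^ n) :
    ∑ i ∈ range N, (ζ ^ k)⁻¹ ^ i * ∑' n, r n * (ζ ^ i * w) ^ n =
      N * ∑' n, if n ≡ k [MOD N] then r n * w ^ n else 0 := by
  have hterm : ∀ n, ∑ i ∈ range N, (ζ ^ k)⁻¹ ^ i * (r n * (ζ ^ i * w) ^ n) =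
      N * if n ≡ k [MOD N] then r n * w ^ n else 0 := fun n => by
    calc ∑ i ∈ range N, (ζ ^ k)⁻¹ ^ i * (r n * (ζ ^ i * w) ^ n)
        = (∑ i ∈ range N, (ζ ^ n * (ζ ^ k)⁻¹) ^ i) * (r n * w ^ n) := by
          rw [sum_mul]
          refine sum_congr rfl fun i _ => ?_
          rw [mul_pow, mul_pow, ← pow_mul, ← pow_mul, mul_comm n i]
          ring
      _ = N * if n ≡ k [MOD N] then r n * w ^ n else 0 := by
          rw [geom_sum_pow_mul_inv_pow hζ]
          split_ifs <;> simp
  simp_rw [← tsum_mul_left]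
  rw [← Summable.tsum_finsetSum fun i _ => (hs i).mul_left _]
  exact tsum_congr hterm

end IsPrimitiveRoot

namespace IsUltrametricDist

variable {R : Type*} [SeminormedRing R] [NormOneClass R] [IsUltrametricDist R]

lemma norm_natCast_eq_one_or_norm_natCast_succ_eq_one (n : ℕ) :
    ‖(n : R)‖ = 1 ∨ ‖((n + 1 : ℕ) : R)‖ = 1 := by
  have h : (1 : ℝ) ≤ max ‖((n + 1 : ℕ) : R)‖ ‖(n : R)‖ := by
    simpa using norm_add_le_max ((n + 1 : ℕ) : R) (-n)
  rcases le_max_iff.mp h with h | h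
  · exact .inr (h.antisymm' (norm_natCast_le_one R _))
  · exact .inl (h.antisymm' (norm_natCast_le_one R _))

lemma exists_lt_norm_natCast_eq_one (k : ℕ) : ∃ N : ℕ, k < N ∧ ‖(N : R)‖ = 1 := by
  rcases norm_natCast_eq_one_or_norm_natCast_succ_eq_one (R := R) (k + 1) with h | h
  · exact ⟨k + 1, k.lt_succ_self, h⟩
  · exact ⟨k + 1 + 1, by omega, h⟩

end IsUltrametricDist

section Ultrametric

variable {K : Type*} [NormedField K] [IsUltrametricDist K] [CompleteSpace K]

lemma summable_mul_pow_of_tendsto {r : ℕ → K} {z : K}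
    (h : Tendsto (fun n => ‖r n‖ * ‖z‖ ^ n) atTop (𝓝 0)) : Summable fun n => r n * z ^ n := by
  apply NonarchimedeanAddGroup.summable_of_tendsto_cofinite_zero
  rw [Nat.cofinite_eq_atTop, tendsto_zero_iff_norm_tendsto_zero]
  simpa only [norm_mul, norm_pow] using h

theorem norm_coeff_mul_pow_le_max_of_isPrimitiveRoot {ζ : K} {N k : ℕ}
    (hζ : IsPrimitiveRoot ζ N) (hN : ‖(N : K)‖ = 1) (hkN : k < N) {r : ℕ → K} {w : K}
    (hconv : Tendsto (fun n => ‖r n‖ * ‖w‖ ^ n) atTop (𝓝 0)) {c ε : ℝ}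
    (hF : ∀ z : K, ‖z‖ = ‖w‖ → ‖∑' n, r n * z ^ n‖ ≤ c) (hε : 0 ≤ ε)
    (htail : ∀ n, N ≤ n → ‖r n‖ * ‖w‖ ^ n ≤ ε) :
    ‖r k‖ * ‖w‖ ^ k ≤ max c ε := by
  have hζ1 : ‖ζ‖ = 1 := norm_eq_one_of_pow_eq_one hζ.pow_eq_one (by omega)
  have hrot : ∀ i : ℕ, ‖ζ ^ i * w‖ = ‖w‖ := by simp [hζ1]
  have hc : 0 ≤ c := (norm_nonneg _).trans (hF w rfl)
  have hfilter := hζ.sum_inv_pow_mul_tsum_eq k fun i =>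
    summable_mul_pow_of_tendsto (r := r) (z := ζ ^ i * w) (by rw [hrot i]; exact hconv)
  set S := ∑ i ∈ range N, (ζ ^ k)⁻¹ ^ i * ∑' n, r n * (ζ ^ i * w) ^ n
  set T := ∑' n, if n = k then 0 else if n ≡ k [MOD N] then r n * w ^ n else 0
  have hS : ‖S‖ ≤ c := by
    refine IsUltrametricDist.norm_sum_le_of_forall_le_of_nonneg hc fun i _ => ?_
    rw [norm_mul, norm_pow, norm_inv, norm_pow, hζ1]
    simpa using hF _ (hrot i)
  have hT : ‖T‖ ≤ ε := by
    refine IsUltrametricDist.norm_tsum_le_of_forall_le_of_nonneg hε fun n => ?_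
    split_ifs with hnk hmod
    · simpa using hε
    · simpa [norm_pow] using htail n (hmod.le_of_ne hkN hnk)
    · simpa using hε
  have hsum : Summable fun n => if n ≡ k [MOD N] then r n * w ^ n else 0 := by
    refine ((summable_mul_pow_of_tendsto hconv).indicator {n | n ≡ k [MOD N]}).congr fun n => ?_
    simp only [Set.indicator_apply, Set.mem_ofPred_eq]
  have hST : S = N * (r k * w ^ k) + N * T := by
    rw [hfilter, hsum.tsum_eq_add_tsum_ite k, if_pos (Nat.ModEq.refl k), mul_add]
  calc ‖r k‖ * ‖w‖ ^ k = ‖S + -(N * T)‖ := by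
        rw [hST, add_neg_cancel_right, norm_mul, hN, one_mul, norm_mul, norm_pow]
    _ ≤ max ‖S‖ ‖-(N * T)‖ := IsUltrametricDist.norm_add_le_max _ _
    _ ≤ max c ε := by
        rw [norm_neg, norm_mul, hN, one_mul]
        exact max_le_max hS hT

theorem norm_coeff_mul_pow_le [IsSepClosed K] {r : ℕ → K} {w : K}
    (hconv : Tendsto (fun n => ‖r n‖ * ‖w‖ ^ n) atTop (𝓝 0)) {c : ℝ}
    (hF : ∀ z : K, ‖z‖ = ‖w‖ → ‖∑' n, r n * z ^ n‖ ≤ c) (k : ℕ) :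
    ‖r k‖ * ‖w‖ ^ k ≤ c := by
  have hc : 0 ≤ c := (norm_nonneg _).trans (hF w rfl)
  refine le_of_forall_pos_le_add fun ε hε => ?_
  obtain ⟨N₀, hN₀⟩ := eventually_atTop.mp (hconv.eventually (ge_mem_nhds hε))
  obtain ⟨N, hN, hNnorm⟩ := IsUltrametricDist.exists_lt_norm_natCast_eq_one (R := K) (max N₀ k)
  have : NeZero (N : K) := ⟨norm_ne_zero_iff.mp (by simp [hNnorm])⟩
  obtain ⟨ζ, hζ⟩ := HasEnoughRootsOfUnity.exists_primitiveRoot K N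
  calc ‖r k‖ * ‖w‖ ^ k
      ≤ max c ε := norm_coeff_mul_pow_le_max_of_isPrimitiveRoot hζ hNnorm (by omega) hconv hF
        hε.le fun n hn => hN₀ n (by omega)
    _ ≤ c + ε := max_le_add_of_nonneg hc hε.le

end Ultrametric

namespace IsAlgClosed

variable {K : Type*} [NontriviallyNormedField K] [IsAlgClosed K]

lemma exists_one_lt_norm_lt {b : ℝ} (hb : 1 < b) : ∃ y : K, 1 < ‖y‖ ∧ ‖y‖ < b := by
  obtain ⟨x, hx⟩ := NontriviallyNormedField.non_trivial (α := K)
  obtain ⟨m, hm⟩ := pow_unbounded_of_one_lt ‖x‖ hb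
  obtain ⟨y, hy⟩ := exists_pow_nat_eq x m.succ_pos
  have hxy : ‖y‖ ^ (m + 1) = ‖x‖ := by rw [← norm_pow, hy]
  refine ⟨y, (one_lt_pow_iff_of_nonneg (norm_nonneg y) m.succ_ne_zero).mp (hxy ▸ hx),
    (pow_lt_pow_iff_left₀ (norm_nonneg y) (by positivity) m.succ_ne_zero).mp ?_⟩
  calc ‖y‖ ^ (m + 1) = ‖x‖ := hxy
    _ < b ^ m := hm
    _ ≤ b ^ (m + 1) := pow_le_pow_right₀ hb.le m.le_succ

/-- The value group of an algebraically closed field is divisible, hence dense in `(0, ∞)`. -/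
lemma exists_lt_norm_lt {s t : ℝ} (hs : 0 ≤ s) (hst : s < t) : ∃ w : K, s < ‖w‖ ∧ ‖w‖ < t := by
  wlog hs0 : 0 < s generalizing s
  · obtain ⟨w, hw, hwt⟩ := this (s := t / 2) (by linarith) (by linarith) (by linarith)
    exact ⟨w, by linarith, hwt⟩
  obtain ⟨y, hy1, hyt⟩ := exists_one_lt_norm_lt (K := K) ((one_lt_div hs0).mpr hst)
  obtain ⟨m, hm, hm'⟩ := exists_mem_Ioc_zpow (hs0.trans hst) hy1
  refine ⟨y ^ m, ?_, by rwa [norm_zpow]⟩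
  have hy0 : 0 < ‖y‖ := one_pos.trans hy1
  rw [norm_zpow, ← mul_lt_mul_iff_of_pos_left hy0]
  calc ‖y‖ * s < t := (lt_div_iff₀ hs0).mp hyt
    _ ≤ ‖y‖ ^ (m + 1) := hm'
    _ = ‖y‖ * ‖y‖ ^ m := by rw [zpow_add_one₀ hy0.ne', mul_comm]

end IsAlgClosed

/-- Let `K` be a complete, algebraically closed field with a nontrivial
nonarchimedean (multiplicative) absolute value. If `F(w) = ∑ rₙ wⁿ` converges on the closed
disc `‖w‖ ≤ ρ` (because `‖rₙ‖ ρⁿ → 0`) and `‖F(w)‖` is constant (equal to some `c ≥ 0`) on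
that disc, then `‖F(0)‖ ≥ ρ ‖r₁‖`. -/
theorem constant_norm_bounds_first_coeff
    {K : Type*} [NontriviallyNormedField K] [IsUltrametricDist K] [CompleteSpace K]
    [IsAlgClosed K]
    (ρ : ℝ) (hρ : 0 < ρ) (r : ℕ → K)
    (hconv : Filter.Tendsto (fun n => ‖r n‖ * ρ ^ n) Filter.atTop (nhds 0))
    (hc : ∃ c : ℝ, 0 ≤ c ∧ ∀ w : K, ‖w‖ ≤ ρ → ‖∑' n : ℕ, r n * w ^ n‖ = c) :
    ρ * ‖r 1‖ ≤ ‖∑' n : ℕ, r n * (0 : K) ^ n‖ := by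
  obtain ⟨c, hc0, hc⟩ := hc
  rw [hc 0 (by simpa using hρ.le)]
  have hcauchy (w : K) (hw : ‖w‖ ≤ ρ) : ‖r 1‖ * ‖w‖ ≤ c := by
    have hconv' : Tendsto (fun n => ‖r n‖ * ‖w‖ ^ n) atTop (𝓝 0) :=
      squeeze_zero (fun n => by positivity) (fun n => by gcongr) hconv
    simpa using norm_coeff_mul_pow_le hconv' (fun z hz => (hc z (hz ▸ hw)).le) 1
  rcases (norm_nonneg (r 1)).eq_or_lt with h0 | hpos
  · simpa [← h0] using hc0
  rw [← le_div_iff₀ hpos]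
  refine le_of_forall_lt_imp_le_of_dense fun s hs => ?_
  obtain ⟨w, hsw, hwρ⟩ := IsAlgClosed.exists_lt_norm_lt (K := K) (le_max_right s 0) (max_lt hs hρ)
  rw [le_div_iff₀ hpos]
  calc s * ‖r 1‖ ≤ ‖w‖ * ‖r 1‖ := by gcongr; exact (le_max_left s 0).trans hsw.le
    _ ≤ c := by rw [mul_comm]; exact hcauchy w hwρ.le
end

section
/- Assume that h satisfies condition (★), i.e. (⌈(p−3)h⌉ − 1)/(3(p−1)) ≥ 1. Then for every pair of integers k and s the set X_{k,s,h} is nonempty: there exists an integer k' with k' ≡ k (mod p−1), with k'−1 ≢ s (mod p+1) and k'−1 ≢ −s (mod p+1), and with ⌊(k'−2)/(p−1)⌋ < h < (k'−2)/2. -/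
/-!
Condition (★) forces `3(p-1) < (p-3)h`, so the open window `2h < k' - 2 < (p-1)⌈h⌉` has length
more than `3(p-1)`, and it contains three consecutive terms `k₀, k₀ + (p-1), k₀ + 2(p-1)` of the
residue class of `k` modulo `p - 1`; every `k'` in the window satisfies the floor inequality. Since
`p - 1 ≡ -2 (mod p+1)` and `p + 1 > 4`, these three terms are pairwise incongruent modulo `p + 1`, so
at most two of them can hit the excluded residues `1 ± s`.
-/

theorem Int.cast_floor_lt_of_lt_ceil {α : Type*} [Ring α] [LinearOrder α] [FloorRing α]
    {x y : α} (h : x < ⌈y⌉) : (⌊x⌋ : α) < y :=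
  Int.lt_ceil.mp (Int.floor_lt.mpr h)

theorem Int.exists_modEq_lt_le_add {d : ℤ} (hd : 0 < d) (k : ℤ) (x : ℝ) :
    ∃ k₀ : ℤ, k₀ ≡ k [ZMOD d] ∧ x < k₀ ∧ (k₀ : ℝ) ≤ x + d := by
  have hd' : (0 : ℝ) < d := by exact_mod_cast hd
  set t := ⌊(x - k) / d⌋
  have ht_le : (t : ℝ) * d ≤ x - k := (le_div_iff₀ hd').mp (Int.floor_le _)
  have ht_lt : x - k < (t + 1) * d := (div_lt_iff₀ hd').mp (Int.lt_floor_add_one _)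
  refine ⟨k + d * (t + 1), Int.modEq_add_fac_self, ?_, ?_⟩ <;> push_cast <;> linarith

theorem Int.exists_not_modEq_of_three_steps {n d : ℤ} (hd : ¬ n ∣ d) (hd₂ : ¬ n ∣ 2 * d)
    (a b c : ℤ) :
    ∃ j : ℤ, 0 ≤ j ∧ j ≤ 2 ∧ ¬ a + d * j ≡ b [ZMOD n] ∧ ¬ a + d * j ≡ c [ZMOD n] := by
  have sep : ∀ i j : ℤ, ¬ n ∣ d * (j - i) → ¬ a + d * i ≡ a + d * j [ZMOD n] := fun i j hij h =>
    hij (by simpa only [add_sub_add_left_eq_sub, mul_sub] using h.dvd)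
  have sep₀₁ := sep 0 1 (by simpa using hd)
  have sep₀₂ := sep 0 2 (by simpa [mul_comm] using hd₂)
  have sep₁₂ := sep 1 2 (by norm_num [hd])
  by_contra! hall
  have hit : ∀ j : ℤ, 0 ≤ j → j ≤ 2 → a + d * j ≡ b [ZMOD n] ∨ a + d * j ≡ c [ZMOD n] :=
    fun j h₀ h₂ => or_iff_not_imp_left.mpr (hall j h₀ h₂)
  rcases hit 0 le_rfl zero_le_two with h₀ | h₀ <;> rcases hit 1 zero_le_one one_le_two with h₁ | h₁ <;>
    rcases hit 2 zero_le_two le_rfl with h₂ | h₂ <;>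
    first
    | exact sep₀₁ (h₀.trans h₁.symm)
    | exact sep₀₂ (h₀.trans h₂.symm)
    | exact sep₁₂ (h₁.trans h₂.symm)

theorem Int.not_dvd_sub_one_of_three_lt {p : ℤ} (hp : 3 < p) :
    ¬ p + 1 ∣ p - 1 ∧ ¬ p + 1 ∣ 2 * (p - 1) := by
  constructor <;> intro h
  · have : p + 1 ∣ 2 := by simpa using dvd_sub (dvd_refl (p + 1)) h
    have := Int.le_of_dvd two_pos this
    omega
  · have : p + 1 ∣ 4 := by
      simpa [mul_add, mul_sub] using dvd_sub (dvd_mul_left (p + 1) 2) h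
    have := Int.le_of_dvd four_pos this
    omega

theorem two_mul_add_lt_mul_ceil_of_star {P h : ℝ} (hP : 3 < P)
    (hstar : 1 ≤ ((⌈(P - 3) * h⌉ : ℝ) - 1) / (3 * (P - 1))) :
    2 * h + 3 * (P - 1) < (P - 1) * ⌈h⌉ := by
  have hstar' : 3 * (P - 1) ≤ (⌈(P - 3) * h⌉ : ℝ) - 1 := by
    rwa [le_div_iff₀ (by linarith), one_mul] at hstar
  have hlt : 3 * (P - 1) < (P - 3) * h := by
    linarith [Int.ceil_lt_add_one ((P - 3) * h)]
  nlinarith [Int.le_ceil h]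

theorem X_nonempty_general (p : ℕ) (hp3 : 3 < p) (h : ℝ)
    (hstar : 1 ≤ ((⌈((p : ℝ) - 3) * h⌉ : ℝ) - 1) / (3 * ((p : ℝ) - 1)))
    (k s : ℤ) :
    ∃ k' : ℤ, Int.ModEq ((p : ℤ) - 1) k' k ∧
      ¬ Int.ModEq ((p : ℤ) + 1) (k' - 1) s ∧
      ¬ Int.ModEq ((p : ℤ) + 1) (k' - 1) (-s) ∧
      ((⌊((k' : ℝ) - 2) / ((p : ℝ) - 1)⌋ : ℝ) < h ∧ h < ((k' : ℝ) - 2) / 2) := by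
  have hpℤ : (3 : ℤ) < p := by exact_mod_cast hp3
  have hpℝ : (3 : ℝ) < p := by exact_mod_cast hp3
  have hwindow := two_mul_add_lt_mul_ceil_of_star hpℝ hstar
  obtain ⟨k₀, hk₀, hlow, hhigh⟩ := Int.exists_modEq_lt_le_add (d := (p : ℤ) - 1) (by omega) k
    (2 * h + 2)
  obtain ⟨hd, hd₂⟩ := Int.not_dvd_sub_one_of_three_lt hpℤ
  obtain ⟨j, hj₀, hj₂, hs, hns⟩ := Int.exists_not_modEq_of_three_steps hd hd₂ (k₀ - 1) s (-s)
  have hjℝ : (0 : ℝ) ≤ j ∧ (j : ℝ) ≤ 2 := ⟨by exact_mod_cast hj₀, by exact_mod_cast hj₂⟩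
  push_cast at hhigh
  refine ⟨k₀ + (p - 1) * j, Int.modEq_add_fac_self.trans hk₀, ?_, ?_, ?_, ?_⟩
  · rwa [sub_add_eq_add_sub] at hs
  · rwa [sub_add_eq_add_sub] at hns
  · refine Int.cast_floor_lt_of_lt_ceil ((div_lt_iff₀ (by linarith)).mpr ?_)
    push_cast
    nlinarith
  · push_cast
    nlinarith

/-- **Proposition 7.4(a).** Let `p > 3` be prime and let `h > 0` satisfy
condition (★): `(⌈(p−3)h⌉ − 1)/(3(p−1)) ≥ 1`. Then for all integers `k, s` the set
`X_{k,s,h}` is nonempty: there is an integer `k'` with `k' ≡ k (mod p−1)`,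
`k'−1 ≢ ±s (mod p+1)`, and `⌊(k'−2)/(p−1)⌋ < h < (k'−2)/2`. -/
theorem X_nonempty (p : ℕ) (hp : p.Prime) (hp3 : 3 < p) (h : ℝ) (hh : 0 < h)
    (hstar : 1 ≤ ((⌈((p : ℝ) - 3) * h⌉ : ℝ) - 1) / (3 * ((p : ℝ) - 1)))
    (k s : ℤ) :
    ∃ k' : ℤ, Int.ModEq ((p : ℤ) - 1) k' k ∧
      ¬ Int.ModEq ((p : ℤ) + 1) (k' - 1) s ∧
      ¬ Int.ModEq ((p : ℤ) + 1) (k' - 1) (-s) ∧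
      ((⌊((k' : ℝ) - 2) / ((p : ℝ) - 1)⌋ : ℝ) < h ∧ h < ((k' : ℝ) - 2) / 2) :=
  X_nonempty_general p hp3 h hstar k s
end

section
/- For all integers k and s and every real number h > 0: either X_{k,s,h} is empty, or there exists k' ∈ X_{k,s,h} such that p^{⌊m_p(h)⌋} divides k' − k (i.e. v_p(k'−k) ≥ ⌊m_p(h)⌋). -/
/-! If (★) fails then `m_p(h) = 0` and any element of `X_{k,s,h}` will do. Otherwise
`q = (p - 1) p^N` with `N = ⌊m_p(h)⌋` satisfies `3q < (p - 3) h`, so the interval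
`(2h + 2, (p - 1) h + 2)`, on which condition (iii) holds, contains three consecutive terms of
`k + qℤ`. They all satisfy (i), and as `q ≡ ∓2` and `2q ≡ ∓4 (mod p + 1)` are nonzero for
`p > 3`, one of them also satisfies (ii). -/

open Real

/-- The set `X_{k,s,h}` of integers `k'` such that (i) `k' ≡ k (mod p−1)`,
(ii) `k'−1 ≢ ±s (mod p+1)`, and (iii) `⌊(k'−2)/(p−1)⌋ < h < (k'−2)/2`. -/
def Xset (p : ℕ) (k s : ℤ) (h : ℝ) : Set ℤ :=
  {k' : ℤ | Int.ModEq ((p : ℤ) - 1) k' k ∧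
    ¬ Int.ModEq ((p : ℤ) + 1) (k' - 1) s ∧
    ¬ Int.ModEq ((p : ℤ) + 1) (k' - 1) (-s) ∧
    ((⌊((k' : ℝ) - 2) / ((p : ℝ) - 1)⌋ : ℝ) < h ∧ h < ((k' : ℝ) - 2) / 2)}

/-- `m_p(h) = log_p((⌈(p−3)h⌉ − 1)/(3(p−1)))` if condition (★) holds, and `0` otherwise. -/
noncomputable def mp (p : ℕ) (h : ℝ) : ℝ :=
  if 1 ≤ ((⌈((p : ℝ) - 3) * h⌉ : ℝ) - 1) / (3 * ((p : ℝ) - 1)) then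
    Real.logb p (((⌈((p : ℝ) - 3) * h⌉ : ℝ) - 1) / (3 * ((p : ℝ) - 1)))
  else 0

lemma pow_toNat_floor_logb_le (b : ℕ) {r : ℝ} (hr : 1 ≤ r) :
    (b : ℝ) ^ ⌊logb b r⌋.toNat ≤ r := by
  rw [floor_logb_natCast (by linarith), Int.log_of_one_le_right b hr, Int.toNat_natCast]
  calc (b : ℝ) ^ Nat.log b ⌊r⌋₊ ≤ (⌊r⌋₊ : ℝ) := by
        exact_mod_cast Nat.pow_log_le_self b (Nat.floor_pos.2 hr).ne'
    _ ≤ r := Nat.floor_le (by linarith)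

/-- `p ^ N` is a unit modulo `p + 1`, and `c (p - 1) ≡ -2c`. -/
lemma Int.not_dvd_mul_sub_one_mul_pow {p c : ℤ} (hc : 0 < c) (hcp : 2 * c < p + 1) (N : ℕ) :
    ¬ p + 1 ∣ c * ((p - 1) * p ^ N) := by
  intro hdvd
  have hcop : IsCoprime (p + 1) (p ^ N) := IsCoprime.pow_right ⟨1, -1, by ring⟩
  have h1 : p + 1 ∣ c * (p - 1) := hcop.dvd_of_dvd_mul_right (by rwa [← mul_assoc] at hdvd)
  have h2 : p + 1 ∣ 2 * c := by
    have := (dvd_mul_left (p + 1) c).sub h1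
    rwa [show c * (p + 1) - c * (p - 1) = 2 * c by ring] at this
  linarith [Int.le_of_dvd (by linarith) h2]

/-- The terms `x`, `x + d`, `x + 2d` are pairwise incongruent modulo `n`, so they cannot all lie
in the two classes of `s` and `t`. -/
lemma Int.exists_add_mul_not_modEq {n d : ℤ} (hd : ¬ n ∣ d) (h2d : ¬ n ∣ 2 * d) (x s t : ℤ) :
    ∃ i : ℤ, 0 ≤ i ∧ i ≤ 2 ∧ ¬ x + i * d ≡ s [ZMOD n] ∧ ¬ x + i * d ≡ t [ZMOD n] := by
  have hsep : ∀ i j c : ℤ, x + i * d ≡ c [ZMOD n] → x + j * d ≡ c [ZMOD n] →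
      n ∣ (i - j) * d := fun i j c hi hj => by
    simpa [sub_mul, add_sub_add_left_eq_sub] using (hj.trans hi.symm).dvd
  by_contra! H
  have hcases : ∀ i, 0 ≤ i → i ≤ 2 → x + i * d ≡ s [ZMOD n] ∨ x + i * d ≡ t [ZMOD n] :=
    fun i h0 h2 => or_iff_not_imp_left.2 (H i h0 h2)
  rcases hcases 0 le_rfl (by norm_num) with h0 | h0 <;>
  rcases hcases 1 (by norm_num) (by norm_num) with h1 | h1 <;>
  rcases hcases 2 (by norm_num) (by norm_num) with h2 | h2
  all_goals first
    | exact hd (by simpa using hsep 1 0 _ h1 h0)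
    | exact hd (by simpa using hsep 2 1 _ h2 h1)
    | exact h2d (by simpa using hsep 2 0 _ h2 h0)

lemma mem_Xset_of_lt {p : ℕ} (hp : 1 < p) {k s k' : ℤ} {h : ℝ}
    (hk' : k' ≡ k [ZMOD p - 1]) (hs : ¬ k' - 1 ≡ s [ZMOD p + 1])
    (hs' : ¬ k' - 1 ≡ -s [ZMOD p + 1])
    (hlo : 2 * h + 2 < k') (hhi : (k' : ℝ) < (p - 1) * h + 2) : k' ∈ Xset p k s h := by
  have hp1 : (0 : ℝ) < p - 1 := by
    have : (1 : ℝ) < p := by exact_mod_cast hp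
    linarith
  refine ⟨hk', hs, hs', ?_, by linarith⟩
  calc (⌊((k' : ℝ) - 2) / (p - 1)⌋ : ℝ) ≤ ((k' : ℝ) - 2) / (p - 1) := Int.floor_le _
    _ < h := by rw [div_lt_iff₀ hp1]; linarith

/-- A window of length `3q` above `2h + 2` contains three consecutive terms of the progression
`k + qℤ`, one of which avoids `±s + 1` modulo `p + 1`. -/
lemma exists_mem_Xset_dvd_sub {p : ℕ} (hp : 1 < p) (k s : ℤ) {h : ℝ} {q : ℤ} (hq : 0 < q)
    (hpq : (p : ℤ) - 1 ∣ q) (hq1 : ¬ (p : ℤ) + 1 ∣ q) (hq2 : ¬ (p : ℤ) + 1 ∣ 2 * q)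
    (hqh : 3 * q < ((p : ℝ) - 3) * h) :
    ∃ k' ∈ Xset p k s h, q ∣ k' - k := by
  obtain ⟨t, ht, -⟩ := existsUnique_add_zsmul_mem_Ioc (Int.cast_pos.2 hq) (k : ℝ) (2 * h + 2)
  obtain ⟨i, hi0, hi2, hs, hs'⟩ := Int.exists_add_mul_not_modEq hq1 hq2 (k + t * q - 1) s (-s)
  have hK : k + (t + i) * q - 1 = k + t * q - 1 + i * q := by ring
  have hq' : (0 : ℝ) < q := Int.cast_pos.2 hq
  have hi0' : (0 : ℝ) ≤ i := Int.cast_nonneg hi0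
  have hi2' : (i : ℝ) ≤ 2 := by exact_mod_cast hi2
  refine ⟨k + (t + i) * q, mem_Xset_of_lt hp ?_ (hK ▸ hs) (hK ▸ hs') ?_ ?_, ?_⟩
  · exact (Int.modEq_iff_dvd.2 (by rw [add_sub_cancel_left]; exact hpq.mul_left _)).symm
  · push_cast; simp only [zsmul_eq_mul, Set.mem_Ioc] at ht; nlinarith [ht.1]
  · push_cast; simp only [zsmul_eq_mul, Set.mem_Ioc] at ht; nlinarith [ht.2]
  · exact ⟨t + i, by ring⟩

lemma three_mul_sub_one_mul_pow_floor_mp_lt {p : ℕ} (hp : 3 < p) {h : ℝ}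
    (hstar : 1 ≤ ((⌈((p : ℝ) - 3) * h⌉ : ℝ) - 1) / (3 * ((p : ℝ) - 1))) :
    3 * (((p : ℝ) - 1) * p ^ ⌊mp p h⌋.toNat) < ((p : ℝ) - 3) * h := by
  have hp' : (3 : ℝ) < p := by exact_mod_cast hp
  have hpow := pow_toNat_floor_logb_le p hstar
  rw [le_div_iff₀ (by linarith)] at hpow
  rw [mp, if_pos hstar]
  linarith [Int.ceil_lt_add_one (((p : ℝ) - 3) * h)]

theorem X_empty_or_deep_congruence_general (p : ℕ) (hp3 : 3 < p)
    (k s : ℤ) (h : ℝ) :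
    Xset p k s h = ∅ ∨
      ∃ k' ∈ Xset p k s h, (p : ℤ) ^ (⌊mp p h⌋.toNat) ∣ (k' - k) := by
  by_cases hstar : (1 : ℝ) ≤ ((⌈((p : ℝ) - 3) * h⌉ : ℝ) - 1) / (3 * ((p : ℝ) - 1))
  · right
    have hp3' : (3 : ℤ) < p := by exact_mod_cast hp3
    obtain ⟨k', hk', hdvd⟩ := exists_mem_Xset_dvd_sub (by omega) k s
      (q := (p - 1) * p ^ ⌊mp p h⌋.toNat) (mul_pos (by omega) (by positivity))
      (dvd_mul_right _ _)
      (by simpa using Int.not_dvd_mul_sub_one_mul_pow one_pos (by omega) ⌊mp p h⌋.toNat)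
      (Int.not_dvd_mul_sub_one_mul_pow two_pos (by omega) _)
      (by push_cast; exact three_mul_sub_one_mul_pow_floor_mp_lt hp3 hstar)
    exact ⟨k', hk', (dvd_mul_left _ _).trans hdvd⟩
  · rcases (Xset p k s h).eq_empty_or_nonempty with hX | ⟨k', hk'⟩
    · exact .inl hX
    · exact .inr ⟨k', hk', by simp [mp, hstar]⟩

/-- **Proposition 7.4(b).** Let `p > 3` be prime. For all integers `k, s` and
every real `h > 0`: either `X_{k,s,h}` is empty, or it contains a `k'` with
`p^⌊m_p(h)⌋ ∣ (k' − k)`, i.e. `v_p(k'−k) ≥ ⌊m_p(h)⌋`. -/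
theorem X_empty_or_deep_congruence (p : ℕ) (hp : p.Prime) (hp3 : 3 < p)
    (k s : ℤ) (h : ℝ) (hh : 0 < h) :
    Xset p k s h = ∅ ∨
      ∃ k' ∈ Xset p k s h, (p : ℤ) ^ (⌊mp p h⌋.toNat) ∣ (k' - k) :=
  X_empty_or_deep_congruence_general p hp3 k s h
end

section
/- Let p > 3 be a prime, let t ≥ 0 be an integer, and let k, s, m, M be integers with M ≥ 3·p^t. Then there exists an integer i with 0 ≤ i < M such that the integer k' := k + (m+i)(p−1) satisfies: p^t divides k' − k, k' − 1 ≢ s (mod p+1), and k' − 1 ≢ −s (mod p+1). -/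
/-! Take the first `i ≥ 0` with `p^t ∣ m + i` and its two successors `i + p^t`, `i + 2p^t`,
all below `3p^t ≤ M`. The corresponding values of `k' - 1` form an arithmetic progression with
step `D = p^t (p - 1)`. Since `p + 1` is coprime to `p^t` and `p - 1 ≡ -2 (mod p + 1)`, neither
`D` nor `2D` is divisible by `p + 1` once `p > 3`, so the three values are pairwise incongruent
modulo `p + 1` and one of them avoids both residues `s` and `-s`. -/

theorem Int.exists_lt_three_not_modEq_of_not_dvd {n D : ℤ} (hD : ¬ n ∣ D) (h2D : ¬ n ∣ 2 * D)
    (a u v : ℤ) : ∃ j : ℤ, 0 ≤ j ∧ j < 3 ∧ ¬ a + j * D ≡ u [ZMOD n] ∧ ¬ a + j * D ≡ v [ZMOD n] := by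
  have collide : ∀ j j' c : ℤ, a + j * D ≡ c [ZMOD n] → a + j' * D ≡ c [ZMOD n] →
      n ∣ (j' - j) * D := fun j j' c h h' => by
    simpa [sub_mul, add_sub_add_left_eq_sub] using (h.trans h'.symm).dvd
  by_contra! hall
  have hit (j : ℤ) (h0 : 0 ≤ j) (h3 : j < 3) : a + j * D ≡ u [ZMOD n] ∨ a + j * D ≡ v [ZMOD n] :=
    or_iff_not_imp_left.2 (hall j h0 h3)
  rcases hit 0 le_rfl (by norm_num) with h0 | h0 <;>
  rcases hit 1 zero_le_one (by norm_num) with h1 | h1 <;>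
  rcases hit 2 zero_le_two (by norm_num) with h2 | h2 <;>
  first
  | exact hD (by simpa using collide 0 1 _ h0 h1)
  | exact hD (by simpa using collide 1 2 _ h1 h2)
  | exact h2D (by simpa using collide 0 2 _ h0 h2)

theorem Int.not_dvd_mul_pow_mul_sub_one {p d : ℤ} (t : ℕ) (hd : 0 < d) (hdp : 2 * d < p + 1) :
    ¬ p + 1 ∣ d * p ^ t * (p - 1) := by
  intro h
  have hcop : IsCoprime (p + 1) (p ^ t) := (show IsCoprime (p + 1) p from ⟨1, -1, by ring⟩).pow_right
  have h1 : p + 1 ∣ d * (p - 1) := hcop.dvd_of_dvd_mul_left (by rwa [mul_left_comm, ← mul_assoc])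
  have h2 : p + 1 ∣ 2 * d := by
    have := dvd_sub (dvd_mul_left (p + 1) d) h1
    rwa [show d * (p + 1) - d * (p - 1) = 2 * d by ring] at this
  exact absurd (Int.le_of_dvd (by omega) h2) (by omega)

theorem Int.exists_nonneg_lt_dvd_add {q : ℤ} (hq : 0 < q) (m : ℤ) :
    ∃ r, 0 ≤ r ∧ r < q ∧ q ∣ m + r :=
  ⟨(-m) % q, Int.emod_nonneg _ hq.ne', Int.emod_lt_of_pos _ hq, by
    simpa [sub_eq_add_neg, add_comm] using (Int.mod_modEq (-m) q).symm.dvd⟩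

theorem exists_index_avoiding_residues_general (p : ℕ) (hp3 : 3 < p)
    (t : ℕ) (k s m M : ℤ) (hM : 3 * (p : ℤ) ^ t ≤ M) :
    ∃ i : ℤ, 0 ≤ i ∧ i < M ∧
      (p : ℤ) ^ t ∣ ((k + (m + i) * ((p : ℤ) - 1)) - k) ∧
      ¬ Int.ModEq ((p : ℤ) + 1) ((k + (m + i) * ((p : ℤ) - 1)) - 1) s ∧
      ¬ Int.ModEq ((p : ℤ) + 1) ((k + (m + i) * ((p : ℤ) - 1)) - 1) (-s) := by
  have hp : (3 : ℤ) < p := by exact_mod_cast hp3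
  set q : ℤ := (p : ℤ) ^ t
  have hq : 0 < q := by positivity
  obtain ⟨r, hr0, hrq, hqr⟩ := Int.exists_nonneg_lt_dvd_add hq m
  obtain ⟨j, hj0, hj3, hs, hs'⟩ := Int.exists_lt_three_not_modEq_of_not_dvd
    (n := p + 1) (D := q * (p - 1))
    (by simpa using Int.not_dvd_mul_pow_mul_sub_one (p := p) t one_pos (by omega))
    (by simpa [mul_assoc] using Int.not_dvd_mul_pow_mul_sub_one (p := p) t two_pos (by omega))
    (k + (m + r) * (p - 1) - 1) s (-s)
  have hk' : k + (m + (r + j * q)) * ((p : ℤ) - 1) - 1 =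
      k + (m + r) * (p - 1) - 1 + j * (q * (p - 1)) := by ring
  refine ⟨r + j * q, by positivity, by nlinarith, ?_, by rwa [hk'], by rwa [hk']⟩
  rw [add_sub_cancel_left, ← add_assoc]
  exact (hqr.add (dvd_mul_left q j)).mul_right _

/-- Let `p > 3` be prime, `t ≥ 0`, and `k, s, m, M` integers with
`M ≥ 3·p^t`. Then there is an integer `i` with `0 ≤ i < M` such that
`k' = k + (m+i)(p−1)` satisfies `p^t ∣ (k' − k)`, `k' − 1 ≢ s (mod p+1)` and
`k' − 1 ≢ −s (mod p+1)`. -/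
theorem exists_index_avoiding_residues (p : ℕ) (hp : p.Prime) (hp3 : 3 < p)
    (t : ℕ) (k s m M : ℤ) (hM : 3 * (p : ℤ) ^ t ≤ M) :
    ∃ i : ℤ, 0 ≤ i ∧ i < M ∧
      (p : ℤ) ^ t ∣ ((k + (m + i) * ((p : ℤ) - 1)) - k) ∧
      ¬ Int.ModEq ((p : ℤ) + 1) ((k + (m + i) * ((p : ℤ) - 1)) - 1) s ∧
      ¬ Int.ModEq ((p : ℤ) + 1) ((k + (m + i) * ((p : ℤ) - 1)) - 1) (-s) :=
  exists_index_avoiding_residues_general p hp3 t k s m M hM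
end

section
/- (Arithmetic core of Theorem 7.6.) Let p > 3 be a prime, let k and s be integers, and let h > 0 be a real number satisfying condition (★), i.e. (⌈(p−3)h⌉ − 1)/(3(p−1)) ≥ 1. Then there exists an integer k' ≥ 2 such that: (a) k' ≡ k (mod (p−1)·p^{⌊m_p(h)⌋}); (b) k'−1 ≢ s (mod p+1) and k'−1 ≢ −s (mod p+1); and (c) ⌊(k'−2)/(p−1)⌋ < h < (k'−2)/2. -/
/-!
Put `N = (p - 1) p^M` with `M = ⌊m_p(h)⌋`. Condition (★) says `p^M ≤ (⌈(p-3)h⌉ - 1)/(3(p-1))`,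
i.e. `3N ≤ ⌈(p-3)h⌉ - 1`, so the interval `⌊2h⌋ + 3 ≤ k' ≤ ⌊2h⌋ + 1 + ⌈(p-3)h⌉`, all of whose
points satisfy (c), contains three terms `k₀, k₀ + N, k₀ + 2N` of the residue class of `k`
modulo `N`. As `p + 1` is coprime to `p` and `p + 1 > 4`, it divides neither `N` nor `2N`, so
these three terms are pairwise incongruent modulo `p + 1`, and one of them misses both forbidden
classes `s + 1` and `1 - s`.
-/

lemma Int.exists_lt_three_not_modEq_add_mul {q N : ℤ} (hN : ¬ q ∣ N) (h2N : ¬ q ∣ 2 * N)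
    (x u v : ℤ) : ∃ i : ℕ, i < 3 ∧ ¬ x + N * i ≡ u [ZMOD q] ∧ ¬ x + N * i ≡ v [ZMOD q] := by
  have distinct : ∀ i j : ℕ, i < j → j < 3 → ¬ x + N * i ≡ x + N * j [ZMOD q] := by
    intro i j hij hj hmod
    have hdvd : q ∣ (j - i : ℤ) * N := by
      simpa only [← mul_sub, mul_comm] using (Int.ModEq.add_left_cancel' x hmod).dvd
    interval_cases j <;> interval_cases i <;> norm_num at hdvd <;> contradiction
  by_contra! H
  have cover : ∀ i : ℕ, i < 3 → x + N * i ≡ u [ZMOD q] ∨ x + N * i ≡ v [ZMOD q] :=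
    fun i hi => or_iff_not_imp_left.mpr (H i hi)
  rcases cover 0 (by norm_num) with h0 | h0 <;> rcases cover 1 (by norm_num) with h1 | h1 <;>
    rcases cover 2 (by norm_num) with h2 | h2
  all_goals first
    | exact distinct 0 1 (by norm_num) (by norm_num) (h0.trans h1.symm)
    | exact distinct 0 2 (by norm_num) (by norm_num) (h0.trans h2.symm)
    | exact distinct 1 2 (by norm_num) (by norm_num) (h1.trans h2.symm)

lemma Int.not_add_one_dvd_two_mul_sub_one_mul_pow {p : ℤ} (hp : 3 < p) (M : ℕ) :
    ¬ p + 1 ∣ 2 * ((p - 1) * p ^ M) := by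
  intro hdvd
  have hcop : IsCoprime (p + 1) (p ^ M) := IsCoprime.pow_right ⟨1, -1, by ring⟩
  have h4 : p + 1 ∣ 4 := by
    have h := hcop.dvd_of_dvd_mul_right (by rwa [← mul_assoc] at hdvd)
    have := dvd_sub (dvd_mul_left (p + 1) 2) h
    rwa [show 2 * (p + 1) - 2 * (p - 1) = 4 by ring] at this
  have := Int.le_of_dvd (by norm_num) h4
  omega

lemma pow_toNat_floor_mp_le {p : ℕ} {h : ℝ}
    (hstar : 1 ≤ ((⌈((p : ℝ) - 3) * h⌉ : ℝ) - 1) / (3 * ((p : ℝ) - 1))) :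
    (p : ℝ) ^ ⌊mp p h⌋.toNat ≤ ((⌈((p : ℝ) - 3) * h⌉ : ℝ) - 1) / (3 * ((p : ℝ) - 1)) := by
  have hr := zero_le_one.trans hstar
  rw [mp, if_pos hstar, Real.floor_logb_natCast hr, Int.log_of_one_le_right _ hstar,
    Int.toNat_natCast, ← Nat.cast_pow, ← Nat.le_floor_iff hr]
  exact Nat.pow_log_le_self p (Nat.floor_pos.mpr hstar).ne'

lemma three_mul_sub_one_mul_pow_le_ceil {p : ℕ} (hp : 1 < p) {h : ℝ}
    (hstar : 1 ≤ ((⌈((p : ℝ) - 3) * h⌉ : ℝ) - 1) / (3 * ((p : ℝ) - 1))) :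
    3 * (((p : ℤ) - 1) * (p : ℤ) ^ ⌊mp p h⌋.toNat) ≤ ⌈((p : ℝ) - 3) * h⌉ - 1 := by
  have hp' : (1 : ℝ) < p := by exact_mod_cast hp
  have := pow_toNat_floor_mp_le hstar
  rw [le_div_iff₀ (by linarith)] at this
  rw [← Int.cast_le (R := ℝ)]
  push_cast
  linarith

lemma weight_bounds_of_mem_Icc {p h : ℝ} (hp : 1 < p) (hh : 0 < h) {n : ℤ}
    (hn : n ∈ Set.Icc (⌊2 * h⌋ + 3) (⌊2 * h⌋ + 1 + ⌈(p - 3) * h⌉)) :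
    2 ≤ n ∧ (⌊((n : ℝ) - 2) / (p - 1)⌋ : ℝ) < h ∧ h < ((n : ℝ) - 2) / 2 := by
  obtain ⟨hlo, hhi⟩ := hn
  have hfloor : 0 ≤ ⌊2 * h⌋ := Int.floor_nonneg.mpr (by positivity)
  have hloR : (⌊2 * h⌋ : ℝ) + 3 ≤ n := by exact_mod_cast hlo
  have hhiR : (n : ℝ) ≤ ⌊2 * h⌋ + 1 + ⌈(p - 3) * h⌉ := by exact_mod_cast hhi
  have := Int.lt_floor_add_one (2 * h)
  have := Int.floor_le (2 * h)
  have := Int.ceil_lt_add_one ((p - 3) * h)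
  refine ⟨by omega, (Int.floor_le _).trans_lt ?_, by linarith⟩
  rw [div_lt_iff₀ (by linarith)]
  linarith

theorem exists_weight_with_deep_congruence_general (p : ℕ) (hp3 : 3 < p)
    (k s : ℤ) (h : ℝ) (hh : 0 < h)
    (hstar : 1 ≤ ((⌈((p : ℝ) - 3) * h⌉ : ℝ) - 1) / (3 * ((p : ℝ) - 1))) :
    ∃ k' : ℤ, 2 ≤ k' ∧
      Int.ModEq (((p : ℤ) - 1) * (p : ℤ) ^ (⌊mp p h⌋.toNat)) k' k ∧
      ¬ Int.ModEq ((p : ℤ) + 1) (k' - 1) s ∧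
      ¬ Int.ModEq ((p : ℤ) + 1) (k' - 1) (-s) ∧
      ((⌊((k' : ℝ) - 2) / ((p : ℝ) - 1)⌋ : ℝ) < h ∧ h < ((k' : ℝ) - 2) / 2) := by
  set N : ℤ := ((p : ℤ) - 1) * (p : ℤ) ^ (⌊mp p h⌋.toNat)
  have hN : 0 < N := mul_pos (by omega) (by positivity)
  have h3N : 3 * N ≤ ⌈((p : ℝ) - 3) * h⌉ - 1 := three_mul_sub_one_mul_pow_le_ceil (by omega) hstar
  set a := ⌊2 * h⌋ + 3
  obtain ⟨k₀, hk₀, hlo, hhi⟩ : ∃ k₀, k₀ ≡ k [ZMOD N] ∧ a ≤ k₀ ∧ k₀ < a + N :=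
    ⟨a + (k - a) % N, by simpa using (Int.mod_modEq (k - a) N).add_left a,
      by linarith [Int.emod_nonneg (k - a) hN.ne'], by linarith [Int.emod_lt_of_pos (k - a) hN]⟩
  have hdvd := Int.not_add_one_dvd_two_mul_sub_one_mul_pow (p := p) (by omega) ⌊mp p h⌋.toNat
  obtain ⟨i, hi, hs, hs'⟩ := Int.exists_lt_three_not_modEq_add_mul
    (fun hN1 => hdvd (dvd_mul_of_dvd_right hN1 2)) hdvd (k₀ - 1) s (-s)
  have hiN : N * i ≤ 2 * N := by nlinarith
  obtain ⟨h2, hbounds⟩ := weight_bounds_of_mem_Icc (p := p) (by norm_cast; omega) hh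
    (n := k₀ + N * i) ⟨by nlinarith, by omega⟩
  refine ⟨k₀ + N * i, h2, Int.modEq_add_fac_self.trans hk₀, ?_, ?_, hbounds⟩ <;>
    rwa [add_sub_right_comm]

/-- **arithmetic core of Theorem 7.6.** Let `p > 3` be prime, `k, s` integers,
and `h > 0` a real satisfying (★). Then there is an integer `k' ≥ 2` with
(a) `k' ≡ k (mod (p−1)p^⌊m_p(h)⌋)`, (b) `k'−1 ≢ ±s (mod p+1)`, and
(c) `⌊(k'−2)/(p−1)⌋ < h < (k'−2)/2`. -/
theorem exists_weight_with_deep_congruence (p : ℕ) (hp : p.Prime) (hp3 : 3 < p)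
    (k s : ℤ) (h : ℝ) (hh : 0 < h)
    (hstar : 1 ≤ ((⌈((p : ℝ) - 3) * h⌉ : ℝ) - 1) / (3 * ((p : ℝ) - 1))) :
    ∃ k' : ℤ, 2 ≤ k' ∧
      Int.ModEq (((p : ℤ) - 1) * (p : ℤ) ^ (⌊mp p h⌋.toNat)) k' k ∧
      ¬ Int.ModEq ((p : ℤ) + 1) (k' - 1) s ∧
      ¬ Int.ModEq ((p : ℤ) + 1) (k' - 1) (-s) ∧
      ((⌊((k' : ℝ) - 2) / ((p : ℝ) - 1)⌋ : ℝ) < h ∧ h < ((k' : ℝ) - 2) / 2) :=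
  exists_weight_with_deep_congruence_general p hp3 k s h hh hstar
end

section
/- Let λ ≥ 1 be an integer and let c be a formal power series in ℤ₂[[w]] lying in the λ-th power of the ideal (8, w) of ℤ₂[[w]]. Let w₀ ∈ ℤ₂ with v₂(w₀) ≥ 3. Then the formal derivative c' = dc/dw, evaluated at w₀ (the evaluation converges since the coefficients of c' lie in ℤ₂ and v₂(w₀) > 0), satisfies v₂(c'(w₀)) ≥ 3(λ − 1); equivalently ‖c'(w₀)‖₂ ≤ 2^{−3(λ−1)}. -/
/-!
Weight the `n`-th coefficient of a series by `rⁿ`, where `r = ‖8‖ = 2⁻³`. Both generators `8` and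
`w` of the ideal have weighted coefficients of norm at most `r`, and since the norm is
ultrametric and all coefficients are integral, the bound `sup ‖aₙ‖ rⁿ ≤ s` is stable under sums
and multiplicative under products. Hence every `c ∈ (8, w)^λ` satisfies `‖aₙ‖ rⁿ ≤ r^λ`.
Differentiating shifts the index by one at the cost of a factor `r⁻¹` (the factor `n + 1` is
integral), and evaluating at `‖w₀‖ ≤ r` is bounded termwise by the weighted coefficients.
-/

open PowerSeries

namespace PowerSeries

/- A coefficientwise bound on `PowerSeries.gaussNorm` at radius `r`; stating it this way avoids the
junk value of that supremum when it is unbounded. -/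
def GaussNormLE {R : Type*} [Semiring R] [Norm R] (r s : ℝ) (f : R⟦X⟧) : Prop :=
  ∀ n, ‖coeff n f‖ * r ^ n ≤ s

section NormedRing

variable {R : Type*} [NormedRing R] {r s t : ℝ} {f g : R⟦X⟧}

theorem GaussNormLE.nonneg (hf : GaussNormLE r s f) : 0 ≤ s :=
  (norm_nonneg (coeff 0 f)).trans (by simpa using hf 0)

theorem gaussNormLE_C (r : ℝ) (a : R) : GaussNormLE r ‖a‖ (C a) := by
  rintro (_ | n) <;> simp

theorem gaussNormLE_X [NormOneClass R] (hr : 0 ≤ r) : GaussNormLE r r (X : R⟦X⟧) := by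
  intro n
  by_cases hn : n = 1
  · simp [hn]
  · simp [coeff_X, hn, hr]

variable [IsUltrametricDist R]

theorem GaussNormLE.add (hr : 0 ≤ r) (hf : GaussNormLE r s f) (hg : GaussNormLE r s g) :
    GaussNormLE r s (f + g) := fun n =>
  calc ‖coeff n (f + g)‖ * r ^ n ≤ max ‖coeff n f‖ ‖coeff n g‖ * r ^ n := by
        rw [map_add]
        gcongr
        exact IsUltrametricDist.norm_add_le_max _ _
    _ ≤ s := by
        rw [max_mul_of_nonneg _ _ (pow_nonneg hr n)]
        exact max_le (hf n) (hg n)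

theorem GaussNormLE.mul (hr : 0 ≤ r) (hf : GaussNormLE r s f) (hg : GaussNormLE r t g) :
    GaussNormLE r (s * t) (f * g) := by
  intro n
  obtain ⟨⟨i, j⟩, hij, hle⟩ := IsUltrametricDist.exists_norm_finsetSum_le_of_nonempty
    (t := Finset.HasAntidiagonal.antidiagonal n) ⟨(n, 0), by simp⟩
    fun x => coeff x.1 f * coeff x.2 g
  rw [Finset.HasAntidiagonal.mem_antidiagonal] at hij
  calc ‖coeff n (f * g)‖ * r ^ n ≤ ‖coeff i f‖ * ‖coeff j g‖ * r ^ n := by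
        rw [coeff_mul]
        gcongr
        exact hle.trans (norm_mul_le _ _)
    _ = (‖coeff i f‖ * r ^ i) * (‖coeff j g‖ * r ^ j) := by
        rw [← hij, pow_add]
        ring
    _ ≤ s * t := mul_le_mul (hf i) (hg j) (by positivity) hf.nonneg

theorem GaussNormLE.norm_tsum_coeff_mul_pow_le [NormOneClass R] (hf : GaussNormLE r s f)
    {w : R} (hw : ‖w‖ ≤ r) : ‖∑' n, coeff n f * w ^ n‖ ≤ s := by
  refine IsUltrametricDist.norm_tsum_le_of_forall_le_of_nonneg hf.nonneg fun n => ?_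
  calc ‖coeff n f * w ^ n‖ ≤ ‖coeff n f‖ * ‖w‖ ^ n :=
        (norm_mul_le _ _).trans (by gcongr; exact norm_pow_le w n)
    _ ≤ ‖coeff n f‖ * r ^ n := by gcongr
    _ ≤ s := hf n

end NormedRing

theorem GaussNormLE.derivative {R : Type*} [NormedCommRing R] [NormOneClass R]
    [IsUltrametricDist R] {r s : ℝ} {f : R⟦X⟧} (hr : 0 < r) (hf : GaussNormLE r s f) :
    GaussNormLE r (s / r) (d⁄dX R f) := by
  intro n
  rw [le_div_iff₀ hr, coeff_derivative, mul_assoc, ← pow_succ]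
  calc ‖coeff (n + 1) f * (n + 1)‖ * r ^ (n + 1) ≤ ‖coeff (n + 1) f‖ * r ^ (n + 1) := by
        gcongr
        simpa using (norm_mul_le _ _).trans <| mul_le_of_le_one_right (norm_nonneg _)
          (IsUltrametricDist.norm_natCast_le_one R (n + 1))
    _ ≤ s := hf (n + 1)

section PadicInt

variable {p : ℕ} [Fact p.Prime] {r : ℝ}

theorem gaussNormLE_one (hr₀ : 0 ≤ r) (hr₁ : r ≤ 1) (f : ℤ_[p]⟦X⟧) : GaussNormLE r 1 f :=
  fun n => mul_le_one₀ (PadicInt.norm_le_one _) (pow_nonneg hr₀ n) (pow_le_one₀ hr₀ hr₁)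

theorem gaussNormLE_of_mem_span_C_X {a : ℤ_[p]} {f : ℤ_[p]⟦X⟧}
    (hf : f ∈ Ideal.span {C a, X}) : GaussNormLE ‖a‖ ‖a‖ f := by
  obtain ⟨u, v, rfl⟩ := Ideal.mem_span_pair.mp hf
  have ha₀ : 0 ≤ ‖a‖ := norm_nonneg a
  have ha₁ : ‖a‖ ≤ 1 := PadicInt.norm_le_one a
  refine GaussNormLE.add ha₀ ?_ ?_
  · simpa using (gaussNormLE_one ha₀ ha₁ u).mul ha₀ (gaussNormLE_C _ a)
  · simpa using (gaussNormLE_one ha₀ ha₁ v).mul ha₀ (gaussNormLE_X ha₀)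

theorem gaussNormLE_of_mem_pow (hr₀ : 0 ≤ r) (hr₁ : r ≤ 1) {I : Ideal ℤ_[p]⟦X⟧} {s : ℝ}
    (hI : ∀ f ∈ I, GaussNormLE r s f) (m : ℕ) {f : ℤ_[p]⟦X⟧} (hf : f ∈ I ^ m) :
    GaussNormLE r (s ^ m) f := by
  induction m generalizing f with
  | zero => simpa using gaussNormLE_one hr₀ hr₁ f
  | succ m ih =>
    rw [pow_succ] at hf
    exact Submodule.mul_induction_on hf (fun g hg h hh => (ih hg).mul hr₀ (hI h hh))
      fun g h hg hh => hg.add hr₀ hh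

end PadicInt

end PowerSeries

theorem norm_eight_padicInt_two : ‖(8 : ℤ_[2])‖ = (2 : ℝ) ^ (-3 : ℤ) := by
  rw [show (8 : ℤ_[2]) = 2 ^ 3 by norm_num, norm_pow,
    show ‖(2 : ℤ_[2])‖ = 2⁻¹ by simpa using PadicInt.norm_p (p := 2)]
  norm_num

theorem derivative_valuation_lower_bound_general (lam : ℕ)
    (c : PowerSeries ℤ_[2])
    (hc : c ∈ (Ideal.span {(8 : PowerSeries ℤ_[2]), (PowerSeries.X : PowerSeries ℤ_[2])}) ^ lam)
    (w₀ : ℤ_[2]) (hw₀ : ‖w₀‖ ≤ (2 : ℝ) ^ (-3 : ℤ)) :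
    ‖∑' n : ℕ, (PowerSeries.coeff (R := ℤ_[2]) n (PowerSeries.derivative ℤ_[2] c)) * w₀ ^ n‖
      ≤ (2 : ℝ) ^ (-(3 * ((lam : ℤ) - 1))) := by
  rw [← map_ofNat C 8] at hc
  have hr₀ : 0 < ‖(8 : ℤ_[2])‖ := by rw [norm_eight_padicInt_two]; positivity
  have hc_gauss := gaussNormLE_of_mem_pow hr₀.le (PadicInt.norm_le_one _)
    (fun _ => gaussNormLE_of_mem_span_C_X) lam hc
  rw [← norm_eight_padicInt_two] at hw₀
  refine ((hc_gauss.derivative hr₀).norm_tsum_coeff_mul_pow_le hw₀).trans_eq ?_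
  rw [norm_eight_padicInt_two, ← zpow_natCast, ← zpow_mul, ← zpow_sub₀ (by norm_num)]
  ring_nf

/-- **Buzzard–Kilford estimate, equation (18).** Let `λ ≥ 1` and let
`c ∈ ℤ₂[[w]]` lie in the `λ`-th power of the ideal `(8, w)`. Let `w₀ ∈ ℤ₂` with
`v₂(w₀) ≥ 3` (i.e. `‖w₀‖₂ ≤ 2⁻³`). Then the formal derivative `c' = dc/dw`, evaluated at
`w₀` via the convergent series `∑ coeff n (c') · w₀ⁿ`, satisfies
`v₂(c'(w₀)) ≥ 3(λ−1)`, i.e. `‖c'(w₀)‖₂ ≤ 2^{−3(λ−1)}`. -/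
theorem derivative_valuation_lower_bound (lam : ℕ) (hlam : 1 ≤ lam)
    (c : PowerSeries ℤ_[2])
    (hc : c ∈ (Ideal.span {(8 : PowerSeries ℤ_[2]), (PowerSeries.X : PowerSeries ℤ_[2])}) ^ lam)
    (w₀ : ℤ_[2]) (hw₀ : ‖w₀‖ ≤ (2 : ℝ) ^ (-3 : ℤ)) :
    ‖∑' n : ℕ, (PowerSeries.coeff (R := ℤ_[2]) n (PowerSeries.derivative ℤ_[2] c)) * w₀ ^ n‖
      ≤ (2 : ℝ) ^ (-(3 * ((lam : ℤ) - 1))) :=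
  derivative_valuation_lower_bound_general lam c hc w₀ hw₀
end
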